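/- arXiv:2206.10724 — 5 statements merged into one kernel-verified Lean document; each statement's English description precedes it below -/
import Mathlib

section
/- Let (f_n) be non-decreasing continuous functions on an interval satisfying (d⁺/dx) f_n(x) ≥ κ f_n(x) / ((1/n) ∑_{i=1}^n f_i(x))^γ with each f_n taking values in (0,1] and f_{n+1} ≤ f_n, and suppose x < y lie in the interval. Then f_n(x) ≤ f_n(y) · exp(−κ (y−x) / ((1/n) ∑_{i=1}^n f_i(y))^γ) for every n ≥ 1. -/
/-!
The running mean `(1/n) ∑_{i ≤ n} f_i` is non-decreasing, so on `[x, y]` it is bounded by its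
value at `y`, and the differential inequality yields `d⁺f_n ≥ c f_n` with the constant rate
`c = κ / mean(y)^γ`. Grönwall's inequality (Mathlib's Dini-derivative version, applied to `-f_n`)
then gives `f_n(x) e^{c (y - x)} ≤ f_n(y)`.
-/

open Set Filter Topology

/-- The lower right Dini derivative `liminf_{ε↓0} (g(x+ε)-g(x))/ε`. -/
noncomputable def lowerRightDini (g : ℝ → ℝ) (x : ℝ) : ℝ :=
  Filter.liminf (fun ε => (g (x + ε) - g x) / ε) (nhdsWithin (0:ℝ) (Set.Ioi 0))

lemma tendsto_sub_const_nhdsGT (x : ℝ) : Tendsto (fun z => z - x) (𝓝[>] x) (𝓝[>] 0) :=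
  tendsto_nhdsWithin_of_tendsto_nhds_of_eventually_within _
    (tendsto_sub_nhds_zero_iff.2 (tendsto_nhdsWithin_of_tendsto_nhds tendsto_id))
    (eventually_nhdsWithin_of_forall fun _ hz => mem_Ioi.2 (sub_pos.2 hz))

lemma eventually_lt_slope_of_lt_lowerRightDini {g : ℝ → ℝ} {x r : ℝ}
    (hbdd : IsBoundedUnder (· ≥ ·) (𝓝[>] 0) fun ε => (g (x + ε) - g x) / ε)
    (hr : r < lowerRightDini g x) :
    ∀ᶠ z in 𝓝[>] x, r < (z - x)⁻¹ * (g z - g x) := by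
  filter_upwards [(tendsto_sub_const_nhdsGT x).eventually (eventually_lt_of_lt_liminf hr hbdd)]
    with z hz
  rwa [add_sub_cancel, div_eq_inv_mul] at hz

lemma isBoundedUnder_ge_diffQuot_of_monotoneOn {g : ℝ → ℝ} {a b x : ℝ}
    (hg : MonotoneOn g (Icc a b)) (hx : x ∈ Ico a b) :
    IsBoundedUnder (· ≥ ·) (𝓝[>] 0) fun ε => (g (x + ε) - g x) / ε := by
  refine isBoundedUnder_of_eventually_ge (a := 0) ?_
  filter_upwards [Ioo_mem_nhdsGT (sub_pos.2 hx.2)] with ε hε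
  have hxε : g x ≤ g (x + ε) :=
    hg (Ico_subset_Icc_self hx) ⟨by linarith [hx.1, hε.1], by linarith [hε.2]⟩ (by linarith [hε.1])
  exact div_nonneg (sub_nonneg.2 hxε) hε.1.le

theorem mul_exp_le_of_mul_le_lowerRightDini {g : ℝ → ℝ} {a b c : ℝ}
    (hg : ContinuousOn g (Icc a b))
    (hbdd : ∀ x ∈ Ico a b, IsBoundedUnder (· ≥ ·) (𝓝[>] 0) fun ε => (g (x + ε) - g x) / ε)
    (hdini : ∀ x ∈ Ico a b, c * g x ≤ lowerRightDini g x) :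
    ∀ x ∈ Icc a b, g a * Real.exp (c * (x - a)) ≤ g x := by
  intro x hx
  have := le_gronwallBound_of_liminf_deriv_right_le (f := fun z => -g z) (f' := fun z => -(c * g z))
    (δ := -g a) (K := c) (ε := 0) hg.neg ?_ le_rfl ?_ x hx
  · rw [gronwallBound_ε0] at this
    linarith
  · intro z hz r hr
    refine (eventually_lt_slope_of_lt_lowerRightDini (hbdd z hz)
      ((neg_lt.1 hr).trans_le (hdini z hz))).frequently.mono fun w hw => ?_
    linarith
  · intro z _
    linarith

noncomputable def runningMean (f : ℕ → ℝ → ℝ) (n : ℕ) (z : ℝ) : ℝ :=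
  (n : ℝ)⁻¹ * ∑ i ∈ Finset.Icc 1 n, f i z

lemma runningMean_pos {f : ℕ → ℝ → ℝ} {n : ℕ} {z : ℝ} (hn : 1 ≤ n)
    (hf : ∀ i ∈ Finset.Icc 1 n, 0 < f i z) : 0 < runningMean f n z :=
  mul_pos (by positivity) (Finset.sum_pos hf ⟨n, Finset.mem_Icc.2 ⟨hn, le_rfl⟩⟩)

lemma monotoneOn_runningMean {f : ℕ → ℝ → ℝ} {n : ℕ} {s : Set ℝ}
    (hf : ∀ i ∈ Finset.Icc 1 n, MonotoneOn (f i) s) : MonotoneOn (runningMean f n) s :=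
  fun _ ha _ hb hab =>
    mul_le_mul_of_nonneg_left (Finset.sum_le_sum fun i hi => hf i hi ha hb hab) (by positivity)

theorem stmt2_general (c1 c2 κ γ : ℝ) (hκ : 0 < κ) (hγ : γ ∈ Set.Ioc (0:ℝ) 1)
    (f : ℕ → ℝ → ℝ)
    (hmono : ∀ n, 1 ≤ n → MonotoneOn (f n) (Set.Icc c1 c2))
    (hcont : ∀ n, 1 ≤ n → ContinuousOn (f n) (Set.Icc c1 c2))
    (hrange : ∀ n, 1 ≤ n → ∀ x ∈ Set.Icc c1 c2, f n x ∈ Set.Ioc (0:ℝ) 1)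
    (hdiff : ∀ n, 1 ≤ n → ∀ x ∈ Set.Icc c1 c2,
      κ * f n x / (((n:ℝ)⁻¹ * ∑ i ∈ Finset.Icc 1 n, f i x) ^ γ) ≤ lowerRightDini (f n) x)
    (x y : ℝ) (hx : x ∈ Set.Icc c1 c2) (hy : y ∈ Set.Icc c1 c2) (hxy : x < y) :
    ∀ n : ℕ, 1 ≤ n →
      f n x ≤ f n y *
        Real.exp (-(κ * (y - x)) / (((n:ℝ)⁻¹ * ∑ i ∈ Finset.Icc 1 n, f i y) ^ γ)) := by
  intro n hn
  have hsub : Icc x y ⊆ Icc c1 c2 := Icc_subset_Icc hx.1 hy.2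
  have hmean_pos : ∀ z ∈ Icc c1 c2, 0 < runningMean f n z := fun z hz =>
    runningMean_pos hn fun i hi => (hrange i (Finset.mem_Icc.1 hi).1 z hz).1
  have hmean_mono : MonotoneOn (runningMean f n) (Icc c1 c2) :=
    monotoneOn_runningMean fun i hi => hmono i (Finset.mem_Icc.1 hi).1
  set A := runningMean f n y ^ γ
  have hA : 0 < A := Real.rpow_pos_of_pos (hmean_pos y hy) γ
  -- On `[x, y]` the mean is at most its value at `y`, which freezes the rate at `κ / A`.
  have hdini : ∀ z ∈ Ico x y, κ / A * f n z ≤ lowerRightDini (f n) z := by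
    intro z hz
    have hz' := hsub (Ico_subset_Icc_self hz)
    calc κ / A * f n z = κ * f n z / A := div_mul_eq_mul_div κ A (f n z)
      _ ≤ κ * f n z / runningMean f n z ^ γ := by
        refine div_le_div_of_nonneg_left (mul_pos hκ (hrange n hn z hz').1).le
          (Real.rpow_pos_of_pos (hmean_pos z hz') γ) ?_
        exact Real.rpow_le_rpow (hmean_pos z hz').le (hmean_mono hz' hy hz.2.le) hγ.1.le
      _ ≤ lowerRightDini (f n) z := hdiff n hn z hz'
  have hgronwall := mul_exp_le_of_mul_le_lowerRightDini ((hcont n hn).mono hsub)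
    (fun z hz => isBoundedUnder_ge_diffQuot_of_monotoneOn ((hmono n hn).mono hsub) hz)
    hdini y ⟨hxy.le, le_rfl⟩
  rwa [neg_div, mul_div_right_comm, Real.exp_neg, le_mul_inv_iff₀ (Real.exp_pos _)]

theorem stmt2 (c1 c2 κ γ : ℝ) (hκ : 0 < κ) (hγ : γ ∈ Set.Ioc (0:ℝ) 1)
    (f : ℕ → ℝ → ℝ)
    (hmono : ∀ n, 1 ≤ n → MonotoneOn (f n) (Set.Icc c1 c2))
    (hcont : ∀ n, 1 ≤ n → ContinuousOn (f n) (Set.Icc c1 c2))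
    (hrange : ∀ n, 1 ≤ n → ∀ x ∈ Set.Icc c1 c2, f n x ∈ Set.Ioc (0:ℝ) 1)
    (hdec : ∀ n, 1 ≤ n → ∀ x ∈ Set.Icc c1 c2, f (n+1) x ≤ f n x)
    (hdiff : ∀ n, 1 ≤ n → ∀ x ∈ Set.Icc c1 c2,
      κ * f n x / (((n:ℝ)⁻¹ * ∑ i ∈ Finset.Icc 1 n, f i x) ^ γ) ≤ lowerRightDini (f n) x)
    (x y : ℝ) (hx : x ∈ Set.Icc c1 c2) (hy : y ∈ Set.Icc c1 c2) (hxy : x < y) :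
    ∀ n : ℕ, 1 ≤ n →
      f n x ≤ f n y *
        Real.exp (-(κ * (y - x)) / (((n:ℝ)⁻¹ * ∑ i ∈ Finset.Icc 1 n, f i y) ^ γ)) :=
  stmt2_general c1 c2 κ γ hκ hγ f hmono hcont hrange hdiff x y hx hy hxy
end

section
/- Let (g_i)_{i≥0} be a sequence in (0,1/3] satisfying g_{i+1} ≤ g_i² for all i ≥ 0, and let (n_i) be defined by n_{i+1} = n_i · ⌊1/g_i⌋ with n_0 ≥ 1 an integer. Then for every i ≥ 2, g_{i-1}² ≤ g_0 n_0 / n_i. -/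
/-!
Iterating `g (j+1) ≤ g j ^ 2` gives `g k ^ 2 ≤ g 0 * ∏_{j ≤ k} g j`, while each factor
`⌊(g j)⁻¹⌋₊ ≤ (g j)⁻¹` of the recursion gives `N (k+1) * ∏_{j ≤ k} g j ≤ N 0`.
Multiplying the two bounds makes the product cancel.
-/

open Finset

lemma sq_le_prod_range_mul_of_le_sq {R : Type*} [CommSemiring R] [PartialOrder R]
    [IsOrderedRing R] {g : ℕ → R} (hg : ∀ i, 0 ≤ g i)
    (hsq : ∀ i, g (i + 1) ≤ g i ^ 2) (k : ℕ) :
    g k ^ 2 ≤ (∏ j ∈ range (k + 1), g j) * g 0 := by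
  induction k with
  | zero => simp [sq]
  | succ k ih =>
    have hle : g (k + 1) ≤ (∏ j ∈ range (k + 1), g j) * g 0 := (hsq k).trans ih
    calc g (k + 1) ^ 2 = g (k + 1) * g (k + 1) := sq _
      _ ≤ g (k + 1) * ((∏ j ∈ range (k + 1), g j) * g 0) := by gcongr; exact hg _
      _ = (∏ j ∈ range (k + 2), g j) * g 0 := by rw [prod_range_succ _ (k + 1)]; ring

section

variable {K : Type*} [Field K] [LinearOrder K] [IsStrictOrderedRing K] [FloorSemiring K]

lemma natFloor_inv_mul_le_one {x : K} (hx : 0 ≤ x) : (⌊x⁻¹⌋₊ : K) * x ≤ 1 := by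
  rcases hx.eq_or_lt with rfl | hpos
  · simp
  · calc (⌊x⁻¹⌋₊ : K) * x ≤ x⁻¹ * x := by gcongr; exact Nat.floor_le (inv_nonneg.mpr hx)
      _ = 1 := inv_mul_cancel₀ hpos.ne'

lemma natCast_mul_prod_range_le {g : ℕ → K} {N : ℕ → ℕ} (hg : ∀ i, 0 ≤ g i)
    (hN : ∀ i, N (i + 1) = N i * ⌊(g i)⁻¹⌋₊) (i : ℕ) :
    (N i : K) * ∏ j ∈ range i, g j ≤ N 0 := by
  induction i with
  | zero => simp
  | succ i ih =>
    have hprod : 0 ≤ ∏ j ∈ range i, g j := prod_nonneg fun j _ => hg j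
    calc (N (i + 1) : K) * ∏ j ∈ range (i + 1), g j
        = (N i * ∏ j ∈ range i, g j) * ((⌊(g i)⁻¹⌋₊ : K) * g i) := by
          rw [hN, prod_range_succ]; push_cast; ring
      _ ≤ N i * ∏ j ∈ range i, g j := by
          apply mul_le_of_le_one_right (by positivity) (natFloor_inv_mul_le_one (hg i))
      _ ≤ N 0 := ih

lemma pos_of_natFloor_inv_rec {g : ℕ → K} {N : ℕ → ℕ}
    (hg : ∀ i, 0 < g i ∧ g i ≤ 1) (hN0 : 0 < N 0)
    (hN : ∀ i, N (i + 1) = N i * ⌊(g i)⁻¹⌋₊) (i : ℕ) : 0 < N i := by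
  induction i with
  | zero => exact hN0
  | succ i ih =>
    rw [hN]
    exact Nat.mul_pos ih (Nat.floor_pos.mpr ((one_le_inv₀ (hg i).1).mpr (hg i).2))

end

theorem stmt3 (g : ℕ → ℝ) (N : ℕ → ℕ)
    (hg : ∀ i, g i ∈ Set.Ioc (0:ℝ) (1/3))
    (hsq : ∀ i, g (i+1) ≤ (g i)^2)
    (hN0 : 1 ≤ N 0)
    (hNrec : ∀ i, N (i+1) = N i * ⌊(g i)⁻¹⌋₊) :
    ∀ i : ℕ, 2 ≤ i → (g (i-1))^2 ≤ g 0 * (N 0 : ℝ) / (N i : ℝ) := by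
  intro i hi
  obtain ⟨k, rfl⟩ : ∃ k, i = k + 1 := ⟨i - 1, by omega⟩
  rw [Nat.add_sub_cancel]
  have hg_nonneg : ∀ i, 0 ≤ g i := fun i => (hg i).1.le
  have hNpos : (0 : ℝ) < N (k + 1) := by
    exact_mod_cast pos_of_natFloor_inv_rec (fun i => ⟨(hg i).1, (hg i).2.trans (by norm_num)⟩)
      hN0 hNrec (k + 1)
  rw [le_div_iff₀ hNpos]
  calc g k ^ 2 * N (k + 1) ≤ (∏ j ∈ range (k + 1), g j) * g 0 * N (k + 1) := by
        gcongr; exact sq_le_prod_range_mul_of_le_sq hg_nonneg hsq k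
    _ = g 0 * (N (k + 1) * ∏ j ∈ range (k + 1), g j) := by ring
    _ ≤ g 0 * N 0 := by
        gcongr
        · exact hg_nonneg 0
        · exact natCast_mul_prod_range_le hg_nonneg hNrec (k + 1)
end

section
/- Let K_α(r) = (1/(1+r²))^{α/2} for α > 0. Then for every integer k ≥ 0, the k-th derivative satisfies K_α^{(k)}(x) ∼ (−1)^k (∏_{i=0}^{k−1} (α+i)) x^{−α−k} as x → ∞, i.e. the ratio of the two sides tends to 1. -/
open Filter Topology Set

/-!
On `(0, ∞)` every derivative of `K_α` is a finite combination of terms `xᵃ (1 + x²)ᵇ` of one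
common weight `a + 2b`. Differentiating such a term of weight `w` produces two terms of weight
`w - 1` whose coefficients `a` and `2b` add up to `w`, so the coefficient sum is multiplied by `w`
at each step; and each term divided by `xʷ` equals `(1 + x⁻²)ᵇ → 1`.
-/

lemma hasDerivAt_rpow_mul_one_add_sq_rpow {x : ℝ} (hx : 0 < x) (a b : ℝ) :
    HasDerivAt (fun x : ℝ => x ^ a * (1 + x ^ 2) ^ b)
      (a * (x ^ (a - 1) * (1 + x ^ 2) ^ b) + 2 * b * (x ^ (a + 1) * (1 + x ^ 2) ^ (b - 1))) x := by
  have hbase : HasDerivAt (fun x : ℝ => 1 + x ^ 2) (2 * x) x := by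
    simpa using (hasDerivAt_pow 2 x).const_add 1
  refine ((Real.hasDerivAt_rpow_const (p := a) (Or.inl hx.ne')).mul
    (hbase.rpow_const (p := b) (Or.inl (by positivity)))).congr_deriv ?_
  rw [Real.rpow_add_one hx.ne']
  ring

lemma tendsto_rpow_mul_one_add_sq_rpow_div (a b : ℝ) :
    Tendsto (fun x : ℝ => x ^ a * (1 + x ^ 2) ^ b / x ^ (a + 2 * b)) atTop (𝓝 1) := by
  have hlim : Tendsto (fun x : ℝ => (1 + (x⁻¹) ^ 2) ^ b) atTop (𝓝 1) := by
    have h := ((tendsto_inv_atTop_zero (𝕜 := ℝ)).pow 2).const_add 1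
    simpa using h.rpow_const (p := b) (Or.inl (by norm_num))
  refine hlim.congr' ?_
  filter_upwards [eventually_gt_atTop (0 : ℝ)] with x hx
  have hsplit : 1 + x ^ 2 = x ^ (2 : ℝ) * (1 + (x⁻¹) ^ 2) := by
    rw [Real.rpow_two]; field_simp; ring
  rw [hsplit, Real.mul_rpow (by positivity) (by positivity), ← Real.rpow_mul hx.le,
    ← mul_assoc, ← Real.rpow_add hx, mul_div_cancel_left₀ _ (by positivity)]

/-- The weight `w` and coefficient sum `C` give the leading behaviour `f x ∼ C xʷ` at infinity. -/
def HasCauchyExpansion (w C : ℝ) (f : ℝ → ℝ) : Prop :=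
  ∃ (ι : Type) (_ : Fintype ι) (c a b : ι → ℝ), (∀ i, a i + 2 * b i = w) ∧ ∑ i, c i = C ∧
    EqOn f (fun x => ∑ i, c i * (x ^ a i * (1 + x ^ 2) ^ b i)) (Ioi 0)

namespace HasCauchyExpansion

lemma deriv {w C : ℝ} {f : ℝ → ℝ} (hf : HasCauchyExpansion w C f) :
    HasCauchyExpansion (w - 1) (w * C) (deriv f) := by
  obtain ⟨ι, _, c, a, b, hw, hC, hf⟩ := hf
  refine ⟨ι ⊕ ι, inferInstance, Sum.elim (fun i => c i * a i) (fun i => c i * (2 * b i)),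
    Sum.elim (fun i => a i - 1) (fun i => a i + 1), Sum.elim b (fun i => b i - 1),
    ?_, ?_, fun x hx => ?_⟩
  · rintro (i | i) <;> simp only [Sum.elim_inl, Sum.elim_inr] <;> linarith [hw i]
  · simp only [Fintype.sum_sum_type, Sum.elim_inl, Sum.elim_inr, ← Finset.sum_add_distrib,
      ← hC, Finset.mul_sum]
    exact Finset.sum_congr rfl fun i _ => by rw [← hw i]; ring
  · have hloc : f =ᶠ[𝓝 x] fun x => ∑ i, c i * (x ^ a i * (1 + x ^ 2) ^ b i) :=
      eventuallyEq_of_mem (Ioi_mem_nhds hx) hf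
    rw [hloc.deriv_eq, (HasDerivAt.fun_sum fun i _ =>
      (hasDerivAt_rpow_mul_one_add_sq_rpow hx (a i) (b i)).const_mul (c i)).deriv]
    simp only [Fintype.sum_sum_type, Sum.elim_inl, Sum.elim_inr, ← Finset.sum_add_distrib]
    exact Finset.sum_congr rfl fun i _ => by ring

lemma iteratedDeriv {w C : ℝ} {f : ℝ → ℝ} (hf : HasCauchyExpansion w C f) (k : ℕ) :
    HasCauchyExpansion (w - k) ((∏ i ∈ Finset.range k, (w - i)) * C) (iteratedDeriv k f) := by
  induction k with
  | zero => simpa using hf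
  | succ k ih =>
    rw [iteratedDeriv_succ, Finset.prod_range_succ]
    convert ih.deriv using 1 <;> push_cast <;> ring

lemma tendsto_div_rpow {w C : ℝ} {f : ℝ → ℝ} (hf : HasCauchyExpansion w C f) :
    Tendsto (fun x => f x / x ^ w) atTop (𝓝 C) := by
  obtain ⟨ι, _, c, a, b, hw, rfl, hf⟩ := hf
  have hterms := tendsto_finsetSum Finset.univ fun i (_ : i ∈ Finset.univ) =>
    ((tendsto_rpow_mul_one_add_sq_rpow_div (a i) (b i)).const_mul (c i))
  simp only [mul_one, hw] at hterms
  refine hterms.congr' ?_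
  filter_upwards [eventually_gt_atTop (0 : ℝ)] with x hx
  rw [hf hx, Finset.sum_div]
  exact Finset.sum_congr rfl fun i _ => (mul_div_assoc _ _ _).symm

end HasCauchyExpansion

lemma hasCauchyExpansion_cauchyKernel (α : ℝ) :
    HasCauchyExpansion (-α) 1 fun r : ℝ => (1 / (1 + r ^ 2)) ^ (α / 2) := by
  refine ⟨Unit, inferInstance, fun _ => 1, fun _ => 0, fun _ => -(α / 2), fun _ => by ring,
    by simp, fun x _ => ?_⟩
  simp only [Finset.univ_unique, Finset.sum_singleton, one_mul, Real.rpow_zero, one_div]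
  rw [Real.inv_rpow (by positivity), Real.rpow_neg (by positivity)]

theorem stmt4 (α : ℝ) (hα : 0 < α) (k : ℕ) :
    Tendsto (fun x : ℝ =>
        iteratedDeriv k (fun r : ℝ => (1 / (1 + r^2)) ^ (α/2)) x /
          ((-1:ℝ)^k * (∏ i ∈ Finset.range k, (α + i)) * x ^ (-α - k)))
      atTop (𝓝 1) := by
  have hC : (-1 : ℝ) ^ k * ∏ i ∈ Finset.range k, (α + i) ≠ 0 :=
    mul_ne_zero (by simp) (Finset.prod_pos fun i _ => by positivity).ne'
  have hprod :
      (∏ i ∈ Finset.range k, (-α - i)) * 1 = (-1) ^ k * ∏ i ∈ Finset.range k, (α + i) := by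
    rw [mul_one, show (-1 : ℝ) ^ k = ∏ _i ∈ Finset.range k, (-1 : ℝ) by simp,
      ← Finset.prod_mul_distrib]
    exact Finset.prod_congr rfl fun i _ => by ring
  have h := ((hasCauchyExpansion_cauchyKernel α).iteratedDeriv k).tendsto_div_rpow
  rw [hprod] at h
  have h' := h.div_const ((-1 : ℝ) ^ k * ∏ i ∈ Finset.range k, (α + i))
  rw [div_self hC] at h'
  simpa only [div_div, mul_comm] using h'
end

section
/- Potter's bounds: if w : ℝ⁺ → (0,∞) is regularly varying at infinity with index −ρ (ρ > 0), then for every δ > 0 there exists x₀ = x₀(δ) such that for all x, y ≥ x₀, w(y)/w(x) ≤ 2 max{(y/x)^{−ρ−δ}, (y/x)^{−ρ+δ}}. -/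
/-!
Put `g u = log w(eᵘ) + ρ u`; regular variation says exactly that `g (u + t) - g u → 0` for
every `t`. Because `g` is measurable this convergence is uniform for `t ∈ [0, 1]` (the uniform
convergence theorem: run Egorov along a hypothetical bad sequence and use that a subset of
`[0, 2]` of measure `> 3/2` meets each of its translates by `t ∈ [0, 1]`). Chaining unit steps
then gives `|g v - g u| ≤ ε |v - u| + ε` for large `u, v`, and `ε = min δ (log 2)`,
`u = log x`, `v = log y` is Potter's bound after exponentiating.
-/

open Filter Topology MeasureTheory Set

lemma exists_mem_and_sub_mem_of_volume_Icc_lt {A : Set ℝ} (hA : MeasurableSet A) {a b t : ℝ}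
    (hAab : A ⊆ Icc a b) (ht : 0 ≤ t) (hvol : volume (Icc a (b + t)) < 2 * volume A) :
    ∃ x ∈ A, x - t ∈ A := by
  by_contra! hdisj
  set B := (fun x => x + -t) ⁻¹' A
  have hB : volume B = volume A := measure_preimage_add_right volume (-t) A
  have hAB : Disjoint A B := Set.disjoint_left.mpr fun x hx hxB => hdisj x hx hxB
  have hsub : A ∪ B ⊆ Icc a (b + t) := by
    refine union_subset (fun x hx => ?_) (fun x hx => ?_) <;>
    · have := hAab hx
      simp only [mem_Icc] at this ⊢
      constructor <;> linarith
  have : 2 * volume A ≤ volume (Icc a (b + t)) := calc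
    2 * volume A = volume (A ∪ B) := by
      rw [measure_union hAB (hA.preimage (measurable_add_const _)), hB, two_mul]
    _ ≤ volume (Icc a (b + t)) := measure_mono hsub
  exact hvol.not_ge this

lemma exists_tendstoUniformlyOn_sub_shift {g : ℝ → ℝ} (hg : Measurable g)
    (h : ∀ t, Tendsto (fun u => g (u + t) - g u) atTop (𝓝 0)) {v : ℕ → ℝ}
    (hv : Tendsto v atTop atTop) (a b : ℝ) {η : ℝ} (hη : 0 < η) :
    ∃ T ⊆ Icc a b, MeasurableSet T ∧ volume T ≤ ENNReal.ofReal η ∧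
      TendstoUniformlyOn (fun n s => g (v n + s) - g (v n)) 0 atTop (Icc a b \ T) :=
  tendstoUniformlyOn_of_ae_tendsto
    (fun n => ((hg.comp (measurable_const_add _)).sub_const _).stronglyMeasurable)
    stronglyMeasurable_const measurableSet_Icc (by simp)
    (.of_forall fun s _ => (h s).comp hv) hη

lemma volume_Icc_zero_three_lt_two_mul_volume_sdiff {T : Set ℝ}
    (hT : volume T ≤ ENNReal.ofReal (1/4)) : volume (Icc (0:ℝ) 3) < 2 * volume (Icc 0 2 \ T) :=
  calc volume (Icc (0:ℝ) 3) = ENNReal.ofReal 3 := by rw [Real.volume_Icc, sub_zero]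
    _ < 2 * (ENNReal.ofReal 2 - ENNReal.ofReal (1/4)) := by
      rw [← ENNReal.ofReal_sub _ (by norm_num), ← ENNReal.ofReal_ofNat 2,
        ← ENNReal.ofReal_mul (by norm_num), ENNReal.ofReal_lt_ofReal_iff] <;> norm_num
    _ ≤ 2 * (volume (Icc (0:ℝ) 2) - volume T) := by rw [Real.volume_Icc, sub_zero]; gcongr
    _ ≤ 2 * volume (Icc 0 2 \ T) := by gcongr; exact le_measure_sdiff

theorem tendstoUniformlyOn_sub_shift_Icc {g : ℝ → ℝ} (hg : Measurable g)
    (h : ∀ t, Tendsto (fun u => g (u + t) - g u) atTop (𝓝 0)) :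
    TendstoUniformlyOn (fun u t => g (u + t) - g u) 0 atTop (Icc 0 1) := by
  rw [Metric.tendstoUniformlyOn_iff]
  intro ε hε
  by_contra hbad
  rw [not_eventually, frequently_atTop] at hbad
  push Not at hbad
  choose u hu t ht hut using fun n : ℕ => hbad n
  have hu_top : Tendsto u atTop atTop := tendsto_atTop_mono hu tendsto_natCast_atTop_atTop
  have hut_top : Tendsto (fun n => u n + t n) atTop atTop :=
    tendsto_atTop_add_right_of_le _ 0 hu_top fun n => (ht n).1
  obtain ⟨T₁, -, hT₁m, hT₁v, hT₁u⟩ :=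
    exists_tendstoUniformlyOn_sub_shift hg h hu_top 0 2 (η := 1/8) (by norm_num)
  obtain ⟨T₂, -, hT₂m, hT₂v, hT₂u⟩ :=
    exists_tendstoUniformlyOn_sub_shift hg h hut_top 0 2 (η := 1/8) (by norm_num)
  have hT : volume (T₁ ∪ T₂) ≤ ENNReal.ofReal (1/4) := by
    refine (measure_union_le _ _).trans ((add_le_add hT₁v hT₂v).trans_eq ?_)
    rw [← ENNReal.ofReal_add] <;> norm_num
  rw [Metric.tendstoUniformlyOn_iff] at hT₁u hT₂u
  obtain ⟨N, hN⟩ := eventually_atTop.mp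
    (((hT₁u (ε/2) (by positivity)).and (hT₂u (ε/2) (by positivity))))
  obtain ⟨x, hxA, hxtA⟩ := exists_mem_and_sub_mem_of_volume_Icc_lt
    (measurableSet_Icc.diff (hT₁m.union hT₂m)) sdiff_subset (ht N).1
    ((volume_Icc_zero_three_lt_two_mul_volume_sdiff hT).trans_le'
      (measure_mono (Icc_subset_Icc le_rfl (by linarith [(ht N).2]))))
  have h₁ := (hN N le_rfl).1 x (sdiff_subset_sdiff_right subset_union_left hxA)
  have h₂ := (hN N le_rfl).2 (x - t N) (sdiff_subset_sdiff_right subset_union_right hxtA)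
  simp only [Pi.zero_apply, dist_zero_left, Real.norm_eq_abs] at h₁ h₂ hut
  have hsplit : g (u N + t N) - g (u N) =
      (g (u N + x) - g (u N)) - (g (u N + t N + (x - t N)) - g (u N + t N)) := by ring_nf
  have := abs_sub (g (u N + x) - g (u N)) (g (u N + t N + (x - t N)) - g (u N + t N))
  rw [← hsplit] at this
  linarith [hut N]

lemma abs_add_sub_le_of_forall_Icc_one {g : ℝ → ℝ} {U ε : ℝ}
    (hg : ∀ u ≥ U, ∀ t ∈ Icc (0:ℝ) 1, |g (u + t) - g u| ≤ ε) (n : ℕ) :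
    ∀ u ≥ U, ∀ s ∈ Icc (0:ℝ) (n + 1), |g (u + s) - g u| ≤ (n + 1) * ε := by
  have hε : 0 ≤ ε := by simpa using hg U le_rfl 0 (by simp)
  induction n with
  | zero => simpa using hg
  | succ n ih =>
    rintro u hu s ⟨hs₀, hs⟩
    push_cast at hs ⊢
    rcases le_total s 1 with hs₁ | hs₁
    · nlinarith [hg u hu s ⟨hs₀, hs₁⟩]
    · have hsplit :
          g (u + s) - g u = (g (u + 1 + (s - 1)) - g (u + 1)) + (g (u + 1) - g u) := by
        ring_nf
      have h₁ := ih (u + 1) (by linarith) (s - 1) ⟨by linarith, by linarith⟩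
      have h₂ := hg u hu 1 ⟨zero_le_one, le_rfl⟩
      rw [hsplit]
      linarith [abs_add_le (g (u + 1 + (s - 1)) - g (u + 1)) (g (u + 1) - g u)]

lemma abs_sub_le_mul_abs_sub_add_of_forall_Icc_one {g : ℝ → ℝ} {U ε : ℝ}
    (hg : ∀ u ≥ U, ∀ t ∈ Icc (0:ℝ) 1, |g (u + t) - g u| ≤ ε) {u v : ℝ} (hu : U ≤ u)
    (hv : U ≤ v) :
    |g v - g u| ≤ ε * |v - u| + ε := by
  wlog huv : u ≤ v generalizing u v
  · rw [abs_sub_comm, abs_sub_comm v]; exact this hv hu (le_of_not_ge huv)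
  have hε : 0 ≤ ε := by simpa using hg U le_rfl 0 (by simp)
  have hs : 0 ≤ v - u := sub_nonneg.mpr huv
  have := abs_add_sub_le_of_forall_Icc_one hg ⌊v - u⌋₊ u hu (v - u)
    ⟨hs, (Nat.lt_floor_add_one _).le⟩
  rw [add_sub_cancel] at this
  rw [abs_of_nonneg hs]
  nlinarith [Nat.floor_le hs]

lemma exists_forall_ge_abs_sub_le_mul_abs_sub_add {g : ℝ → ℝ} (hg : Measurable g)
    (h : ∀ t, Tendsto (fun u => g (u + t) - g u) atTop (𝓝 0)) {ε : ℝ} (hε : 0 < ε) :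
    ∃ U, ∀ u v, U ≤ u → U ≤ v → |g v - g u| ≤ ε * |v - u| + ε := by
  obtain ⟨U, hU⟩ := eventually_atTop.mp <|
    Metric.tendstoUniformlyOn_iff.mp (tendstoUniformlyOn_sub_shift_Icc hg h) ε hε
  refine ⟨U, fun u v hu hv =>
    abs_sub_le_mul_abs_sub_add_of_forall_Icc_one (fun u hu t ht => ?_) hu hv⟩
  simpa only [Pi.zero_apply, dist_zero_left, Real.norm_eq_abs] using (hU u hu t ht).le

lemma le_mul_rpow_of_log_le {q r c k : ℝ} (hq : 0 < q) (hr : 0 < r) (hk : 0 < k)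
    (h : Real.log q ≤ c * Real.log r + Real.log k) : q ≤ k * r ^ c := by
  rwa [← Real.log_le_log_iff hq (by positivity), Real.log_mul hk.ne' (by positivity),
    Real.log_rpow hr, add_comm]

lemma le_two_mul_max_rpow_of_abs_log_le {q r ρ δ : ℝ} (hq : 0 < q) (hr : 0 < r)
    (h : |Real.log q + ρ * Real.log r| ≤ δ * |Real.log r| + Real.log 2) :
    q ≤ 2 * max (r ^ (-ρ - δ)) (r ^ (-ρ + δ)) := by
  have h' := (abs_le.mp h).2
  rcases le_total 0 (Real.log r) with hr₀ | hr₀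
  · rw [abs_of_nonneg hr₀] at h'
    refine (le_mul_rpow_of_log_le (c := -ρ + δ) hq hr two_pos (by linarith)).trans ?_
    gcongr; exact le_max_right _ _
  · rw [abs_of_nonpos hr₀] at h'
    refine (le_mul_rpow_of_log_le (c := -ρ - δ) hq hr two_pos (by linarith)).trans ?_
    gcongr; exact le_max_left _ _

lemma tendsto_log_comp_exp_add_sub {ρ : ℝ} {w : ℝ → ℝ} (hw_pos : ∀ᶠ x in atTop, 0 < w x)
    (hw_rv : ∀ v > (0:ℝ), Tendsto (fun u => w (u * v) / w u) atTop (𝓝 (v ^ (-ρ)))) (t : ℝ) :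
    Tendsto (fun u => Real.log (w (Real.exp (u + t))) - Real.log (w (Real.exp u))) atTop
      (𝓝 (-ρ * t)) := by
  have hlim := ((Real.continuousAt_log (Real.rpow_pos_of_pos (Real.exp_pos t) (-ρ)).ne'
    ).tendsto.comp (hw_rv _ (Real.exp_pos t))).comp Real.tendsto_exp_atTop
  rw [Real.log_rpow (Real.exp_pos t), Real.log_exp] at hlim
  have hw_pos' := Real.tendsto_exp_atTop.eventually hw_pos
  have hw_pos_t := (tendsto_atTop_add_const_right _ t tendsto_id).eventually hw_pos'
  refine hlim.congr' ?_
  filter_upwards [hw_pos', hw_pos_t] with u hu hut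
  simp only [Function.comp_apply, id, Real.exp_add] at hu hut ⊢
  exact Real.log_div hut.ne' hu.ne'

theorem stmt8_general (ρ : ℝ) (w : ℝ → ℝ)
    (hw_meas : Measurable w)
    (hw_pos : ∀ᶠ x in atTop, 0 < w x)
    (hw_rv : ∀ v > (0:ℝ), Tendsto (fun u => w (u*v) / w u) atTop (𝓝 (v ^ (-ρ)))) :
    ∀ δ > (0:ℝ), ∃ x₀ : ℝ, ∀ x y : ℝ, x₀ ≤ x → x₀ ≤ y →
      w y / w x ≤ 2 * max ((y/x) ^ (-ρ - δ)) ((y/x) ^ (-ρ + δ)) := by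
  intro δ hδ
  set g : ℝ → ℝ := fun u => Real.log (w (Real.exp u)) + ρ * u with hg
  have hg_meas : Measurable g := by fun_prop
  have hg_shift (t : ℝ) : Tendsto (fun u => g (u + t) - g u) atTop (𝓝 0) := by
    convert (tendsto_log_comp_exp_add_sub hw_pos hw_rv t).add_const (ρ * t) using 2
    · simp only [hg]
      ring
    · ring
  obtain ⟨U, hU⟩ := exists_forall_ge_abs_sub_le_mul_abs_sub_add hg_meas hg_shift
    (lt_min hδ (Real.log_pos one_lt_two))
  obtain ⟨X, hX⟩ := eventually_atTop.mp hw_pos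
  refine ⟨max (Real.exp U) X, fun x y hx hy => ?_⟩
  have hx₀ : 0 < x := (Real.exp_pos U).trans_le (le_of_max_le_left hx)
  have hy₀ : 0 < y := (Real.exp_pos U).trans_le (le_of_max_le_left hy)
  have hwx : 0 < w x := hX x (le_of_max_le_right hx)
  have hwy : 0 < w y := hX y (le_of_max_le_right hy)
  have hgxy := hU (Real.log x) (Real.log y)
    ((Real.le_log_iff_exp_le hx₀).mpr (le_of_max_le_left hx))
    ((Real.le_log_iff_exp_le hy₀).mpr (le_of_max_le_left hy))
  simp only [hg, Real.exp_log hx₀, Real.exp_log hy₀] at hgxy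
  refine le_two_mul_max_rpow_of_abs_log_le (div_pos hwy hwx) (div_pos hy₀ hx₀) ?_
  rw [Real.log_div hwy.ne' hwx.ne', Real.log_div hy₀.ne' hx₀.ne']
  calc _ = |Real.log (w y) + ρ * Real.log y - (Real.log (w x) + ρ * Real.log x)| := by ring_nf
    _ ≤ min δ (Real.log 2) * |Real.log y - Real.log x| + min δ (Real.log 2) := hgxy
    _ ≤ δ * |Real.log y - Real.log x| + Real.log 2 := by
      gcongr
      exacts [min_le_left _ _, min_le_right _ _]

theorem stmt8 (ρ : ℝ) (hρ : 0 < ρ) (w : ℝ → ℝ)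
    (hw_meas : Measurable w)
    (hw_pos : ∀ᶠ x in atTop, 0 < w x)
    (hw_rv : ∀ v > (0:ℝ), Tendsto (fun u => w (u*v) / w u) atTop (𝓝 (v ^ (-ρ)))) :
    ∀ δ > (0:ℝ), ∃ x₀ : ℝ, ∀ x y : ℝ, x₀ ≤ x → x₀ ≤ y →
      w y / w x ≤ 2 * max ((y/x) ^ (-ρ - δ)) ((y/x) ^ (-ρ + δ)) :=
  stmt8_general ρ w hw_meas hw_pos hw_rv
end

section
/- Let f be a stationary planar random field with positive associations (increasing events are positively correlated), whose law equals the law of −f. Let NodalArm(R) be the event that {f = 0} contains a path from Λ_{1/2} to ∂Λ_R and Arm(R) the event that {f ≥ 0} contains such a path. Then ℙ[NodalArm(R)] ≤ ℙ[Arm(R)]², and consequently if ℙ[NodalArm(R)] ≥ c R^{−1} for all R ≥ 1 then ℙ[Arm(R)] ≥ √c · R^{−1/2}. -/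
/-!
A nodal arm of `f` is an arm of both `f` and `-f`: the first event is increasing, the second
decreasing, so positive association makes them negatively correlated, and the symmetry
`f ↦ -f` turns the product of their probabilities into a square.
-/

open MeasureTheory

theorem measure_inter_le_mul_of_mul_le_measure_inter_compl {Ω : Type*} [MeasurableSpace Ω]
    {μ : Measure Ω} [IsProbabilityMeasure μ] {A B : Set Ω} (hB : MeasurableSet B)
    (hcorr : μ A * μ Bᶜ ≤ μ (A ∩ Bᶜ)) :
    μ (A ∩ B) ≤ μ A * μ B :=
  calc μ (A ∩ B) = μ A - μ (A ∩ Bᶜ) :=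
        ENNReal.eq_sub_of_add_eq (measure_ne_top μ _) (measure_inter_add_sdiff A hB)
    _ ≤ μ A - μ A * μ Bᶜ := tsub_le_tsub_left hcorr _
    _ = μ A * (1 - μ Bᶜ) := by rw [ENNReal.mul_sub fun _ _ ↦ measure_ne_top μ A, mul_one]
    _ = μ A * μ B := by rw [← prob_compl_eq_one_sub hB.compl, compl_compl]

theorem ENNReal.ofReal_sqrt_le_of_ofReal_le_sq {a : ℝ} {x : ENNReal}
    (h : ENNReal.ofReal a ≤ x ^ 2) : ENNReal.ofReal √a ≤ x := by
  rcases lt_or_ge a 0 with ha | ha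
  · simp [Real.sqrt_eq_zero'.mpr ha.le]
  · rwa [← ENNReal.pow_le_pow_left_iff two_ne_zero,
      ← ENNReal.ofReal_pow (Real.sqrt_nonneg a), Real.sq_sqrt ha]

theorem Real.sqrt_mul_rpow_neg_half {c R : ℝ} (hR : 0 ≤ R) :
    √c * R ^ (-(1 / 2) : ℝ) = √(c / R) := by
  rw [Real.rpow_neg hR, ← Real.sqrt_eq_rpow, Real.sqrt_div' c hR, div_eq_mul_inv]

theorem stmt16 {Ω : Type*} [MeasurableSpace Ω] [PartialOrder Ω]
    (μ : Measure Ω) [IsProbabilityMeasure μ]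
    (NodalArm Arm ArmNeg : ℝ → Set Ω)
    (hmeas : ∀ R, MeasurableSet (Arm R) ∧ MeasurableSet (ArmNeg R) ∧
      MeasurableSet (NodalArm R))
    (hFKG : ∀ A B : Set Ω, IsUpperSet A → IsUpperSet B → μ A * μ B ≤ μ (A ∩ B))
    (hup : ∀ R, IsUpperSet (Arm R))
    (hdown : ∀ R, IsUpperSet (ArmNeg R)ᶜ)
    (hsym : ∀ R, μ (ArmNeg R) = μ (Arm R))
    (hincl : ∀ R, NodalArm R ⊆ Arm R ∩ ArmNeg R) :
    (∀ R, μ (NodalArm R) ≤ μ (Arm R) ^ 2) ∧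
    ∀ c > (0:ℝ), (∀ R : ℝ, 1 ≤ R → ENNReal.ofReal (c / R) ≤ μ (NodalArm R)) →
      ∀ R : ℝ, 1 ≤ R → ENNReal.ofReal (Real.sqrt c * R ^ (-(1/2) : ℝ)) ≤ μ (Arm R) := by
  have hsq : ∀ R, μ (NodalArm R) ≤ μ (Arm R) ^ 2 := fun R ↦
    calc μ (NodalArm R) ≤ μ (Arm R ∩ ArmNeg R) := measure_mono (hincl R)
      _ ≤ μ (Arm R) * μ (ArmNeg R) := measure_inter_le_mul_of_mul_le_measure_inter_compl
          (hmeas R).2.1 (hFKG _ _ (hup R) (hdown R))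
      _ = μ (Arm R) ^ 2 := by rw [hsym R, sq]
  refine ⟨hsq, fun c _ hlb R hR ↦ ?_⟩
  rw [Real.sqrt_mul_rpow_neg_half (zero_le_one.trans hR)]
  exact ENNReal.ofReal_sqrt_le_of_ofReal_le_sq ((hlb R hR).trans (hsq R))
end
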